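/- arXiv:math/0104161 — 2 statements merged into one kernel-verified Lean document; each statement's English description precedes it below -/
import Mathlib

section
/- In the region R₀ defined by 1/√2 < x ≤ 1 and 1/√(2-δ) < y ≤ √(1-ε) with 0 < δ < 1/2 and 0 < ε < 1/2, one has (1-y²)/y² < 1-δ and 2x²-1 > 0, and hence the discriminant αγ - β² = (y²(1-y²)/4)·(3x² - ((1-y²)/y²)·x² - 1) is strictly positive, where α = (y/2)(3x²-1), γ = (y/2)(1-y²), 2β = -(1-y²)x. -/
/-! With `p = x²` and `q = y²`, the discriminant is `αγ - β² = (1 - q)/4 · (p(2q - 1) + q(2p - 1))`.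
The lower bounds on `x` and `y` say exactly `2p > 1` and `(2 - δ) q > 1`, so `2q > 1` as `δ > 0`,
and the upper bound on `y` gives `q < 1`. -/

open Real

lemma one_lt_mul_sq_of_one_div_sqrt_lt {a y : ℝ} (ha : 0 < a) (h : 1 / √a < y) :
    1 < a * y ^ 2 := by
  have hy : 0 < y := (by positivity : 0 < 1 / √a).trans h
  rw [div_lt_iff₀ (sqrt_pos.2 ha)] at h
  calc 1 < (y * √a) ^ 2 := by nlinarith [sqrt_nonneg a]
    _ = a * y ^ 2 := by rw [mul_pow, sq_sqrt ha.le, mul_comm]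

lemma sq_lt_one_of_le_sqrt_one_sub {ε y : ℝ} (hε : 0 < ε) (hy : 0 < y) (h : y ≤ √(1 - ε)) :
    y ^ 2 < 1 := by
  linarith [(le_sqrt' hy).1 h]

lemma discriminant_eq (x y : ℝ) :
    (y/2 * (3*x^2 - 1)) * (y/2 * (1 - y^2)) - (-(1 - y^2) * x / 2)^2 =
      (1 - y^2) / 4 * (x^2 * (2*y^2 - 1) + y^2 * (2*x^2 - 1)) := by
  ring

lemma discriminant_pos {x y : ℝ} (hx : 1 < 2 * x^2) (hy : 1 < 2 * y^2) (hy1 : y^2 < 1) :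
    0 < (y/2 * (3*x^2 - 1)) * (y/2 * (1 - y^2)) - (-(1 - y^2) * x / 2)^2 := by
  rw [discriminant_eq]
  have : 0 < x^2 * (2*y^2 - 1) + y^2 * (2*x^2 - 1) := by
    apply add_pos <;> apply mul_pos <;> nlinarith
  have : 0 < (1 - y^2) / 4 := by linarith
  positivity

theorem stmt_17_general (δ ε x y : ℝ) (hδ1 : 0 < δ) (hδ2 : δ < 1/2)
    (hε1 : 0 < ε)
    (hx1 : 1 / Real.sqrt 2 < x)
    (hy1 : 1 / Real.sqrt (2 - δ) < y) (hy2 : y ≤ Real.sqrt (1 - ε)) :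
    (1 - y^2) / y^2 < 1 - δ ∧ 2*x^2 - 1 > 0 ∧
      (y/2 * (3*x^2 - 1)) * (y/2 * (1 - y^2)) - (-(1 - y^2) * x / 2)^2 > 0 := by
  have hx : 1 < 2 * x^2 := one_lt_mul_sq_of_one_div_sqrt_lt two_pos hx1
  have hy : 1 < (2 - δ) * y^2 := one_lt_mul_sq_of_one_div_sqrt_lt (by linarith) hy1
  have hy0 : 0 < y := (one_div_pos.2 (sqrt_pos.2 (by linarith))).trans hy1
  have hy_lt_one : y^2 < 1 := sq_lt_one_of_le_sqrt_one_sub hε1 hy0 hy2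
  refine ⟨?_, by linarith, discriminant_pos hx (by nlinarith) hy_lt_one⟩
  rw [div_lt_iff₀ (by positivity)]
  linarith

theorem stmt_17 (δ ε x y : ℝ) (hδ1 : 0 < δ) (hδ2 : δ < 1/2)
    (hε1 : 0 < ε) (hε2 : ε < 1/2)
    (hx1 : 1 / Real.sqrt 2 < x) (hx2 : x ≤ 1)
    (hy1 : 1 / Real.sqrt (2 - δ) < y) (hy2 : y ≤ Real.sqrt (1 - ε)) :
    (1 - y^2) / y^2 < 1 - δ ∧ 2*x^2 - 1 > 0 ∧
      (y/2 * (3*x^2 - 1)) * (y/2 * (1 - y^2)) - (-(1 - y^2) * x / 2)^2 > 0 :=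
  stmt_17_general δ ε x y hδ1 hδ2 hε1 hx1 hy1 hy2
end

section
/- In the region R₀ (1/√2 < x ≤ 1, 1/√(2-δ) < y ≤ √(1-ε), 0 < δ, ε < 1/2), the pointwise estimate (y/2)(3x²-1)w₁² - (1-y²)x·w₁w₂ + (y/2)(1-y²)w₂² ≥ (ε(1-√(1-δ))/(2√(2-δ)))·(w₁² + w₂²) holds for all w₁, w₂ ∈ ℝ. -/
/-!
Write `s = √(2-δ)`, `t = √(1-δ)` (so `s² = 1 + t²`) and `m = ε(1-t)/(2s)`. The claim says that
the binary quadratic form `a w₁² - b w₁w₂ + c w₂²` minus `m(w₁² + w₂²)` is positive semidefinite,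
which follows from `a - m > 0` and `b² ≤ 4(a - m)(c - m)`. After clearing `s`, the discriminant
inequality is affine in `x²` with nonnegative slope, so it suffices to check it at `x² = 1/2`;
there, using `ε ≤ 1 - y²`, it reduces to a cubic inequality in `y` on `y ≥ 1/s`, which holds with
the slack `t(1-t)³/s³` at the endpoint `y = 1/s`.
-/

theorem quadForm_nonneg_of_sq_le_four_mul {p q b : ℝ} (hp : 0 < p) (hb : b ^ 2 ≤ 4 * p * q)
    (u v : ℝ) : 0 ≤ p * u ^ 2 - b * u * v + q * v ^ 2 := by
  have hsq : 4 * p * (p * u ^ 2 - b * u * v + q * v ^ 2)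
      = (2 * p * u - b * v) ^ 2 + (4 * p * q - b ^ 2) * v ^ 2 := by ring
  have hb' := sub_nonneg.2 hb
  refine (mul_nonneg_iff_of_pos_left (by positivity : (0:ℝ) < 4 * p)).mp ?_
  rw [hsq]
  positivity

section

variable {s t y : ℝ}

theorem cubic_le_of_one_le_mul (ht0 : 0 ≤ t) (ht1 : t ≤ 1) (hs0 : 0 < s)
    (hst : s ^ 2 = 1 + t ^ 2) (hys : 1 ≤ y * s) :
    (1 - t) * y * (3 - 2 * y ^ 2) ≤ s * (2 * y ^ 2 - 1) := by
  have hy0 : 0 < y := pos_of_mul_pos_left (by linarith) hs0.le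
  set B := 2 * (1 - t) * ((y * s) ^ 2 + y * s - 2) + 3 * (1 - t) * (2 - s ^ 2)
    + 2 * s ^ 3 * y + 2 * s ^ 2
  have hB : 0 ≤ B := by
    have : 0 ≤ (y * s) ^ 2 + y * s - 2 := by nlinarith
    have : 0 ≤ 2 - s ^ 2 := by nlinarith
    have := sub_nonneg.2 ht1
    positivity
  have key : s ^ 3 * (s * (2 * y ^ 2 - 1) - (1 - t) * y * (3 - 2 * y ^ 2))
      = (y * s - 1) * B + t * (1 - t) ^ 3 := by
    linear_combination (-2 + 3 * t - t ^ 2 - s ^ 2) * hst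
  have : 0 ≤ s ^ 3 * (s * (2 * y ^ 2 - 1) - (1 - t) * y * (3 - 2 * y ^ 2)) := by
    rw [key]
    have := sub_nonneg.2 hys
    have := sub_nonneg.2 ht1
    positivity
  exact sub_nonneg.1 <| (mul_nonneg_iff_of_pos_left (pow_pos hs0 3)).mp this

theorem slope_le_of_one_le_mul (ht0 : 0 ≤ t) (ht1 : t ≤ 1) (hs0 : 0 < s)
    (hst : s ^ 2 = 1 + t ^ 2) (hys : 1 ≤ y * s) :
    3 * (1 - t) * y ≤ s * (4 * y ^ 2 - 1) := by
  have key : s * (s * (4 * y ^ 2 - 1) - 3 * (1 - t) * y)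
      = (y * s - 1) * (4 * (y * s) + 1 + 3 * t) + t * (3 - t) := by
    linear_combination (-1) * hst
  have : 0 ≤ s * (s * (4 * y ^ 2 - 1) - 3 * (1 - t) * y) := by
    rw [key]
    have := sub_nonneg.2 hys
    have : 0 ≤ 3 - t := by linarith
    positivity
  exact sub_nonneg.1 <| (mul_nonneg_iff_of_pos_left hs0).mp this

theorem discr_le_of_one_le_mul {x ε : ℝ} (ht0 : 0 ≤ t) (ht1 : t ≤ 1) (hs0 : 0 < s)
    (hst : s ^ 2 = 1 + t ^ 2) (hys : 1 ≤ y * s) (hε0 : 0 ≤ ε) (hεy : ε ≤ 1 - y ^ 2)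
    (hx : 1 ≤ 2 * x ^ 2) :
    ε * (1 - t) * y * (3 * x ^ 2 - y ^ 2)
      ≤ s * (1 - y ^ 2) * (x ^ 2 * (4 * y ^ 2 - 1) - y ^ 2) := by
  have hy0 : 0 < y := pos_of_mul_pos_left (by linarith) hs0.le
  have hslope : 3 * ε * (1 - t) * y ≤ s * (1 - y ^ 2) * (4 * y ^ 2 - 1) := by
    have hlin := slope_le_of_one_le_mul ht0 ht1 hs0 hst hys
    have : 0 ≤ (1 - t) * y := by positivity
    calc 3 * ε * (1 - t) * y ≤ (1 - y ^ 2) * (3 * (1 - t) * y) := by nlinarith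
      _ ≤ (1 - y ^ 2) * (s * (4 * y ^ 2 - 1)) := by gcongr; linarith
      _ = s * (1 - y ^ 2) * (4 * y ^ 2 - 1) := by ring
  have hhalf : ε * (1 - t) * y * (3 - 2 * y ^ 2) ≤ s * (1 - y ^ 2) * (2 * y ^ 2 - 1) := by
    have hcub := cubic_le_of_one_le_mul ht0 ht1 hs0 hst hys
    have : 0 ≤ 3 - 2 * y ^ 2 := by nlinarith
    have : 0 ≤ (1 - t) * y * (3 - 2 * y ^ 2) := by positivity
    calc ε * (1 - t) * y * (3 - 2 * y ^ 2) ≤ (1 - y ^ 2) * ((1 - t) * y * (3 - 2 * y ^ 2)) := by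
          nlinarith
      _ ≤ (1 - y ^ 2) * (s * (2 * y ^ 2 - 1)) := by gcongr; linarith
      _ = s * (1 - y ^ 2) * (2 * y ^ 2 - 1) := by ring
  nlinarith [mul_nonneg (show (0:ℝ) ≤ 2 * x ^ 2 - 1 by linarith) (sub_nonneg.2 hslope)]

theorem sq_le_four_mul_sub_of_one_le_mul {x ε : ℝ} (ht0 : 0 ≤ t) (ht1 : t ≤ 1) (hs0 : 0 < s)
    (hst : s ^ 2 = 1 + t ^ 2) (hys : 1 ≤ y * s) (hε0 : 0 ≤ ε) (hεy : ε ≤ 1 - y ^ 2)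
    (hx : 1 ≤ 2 * x ^ 2) :
    ((1 - y ^ 2) * x) ^ 2 ≤ 4 * (y / 2 * (3 * x ^ 2 - 1) - ε * (1 - t) / (2 * s))
      * (y / 2 * (1 - y ^ 2) - ε * (1 - t) / (2 * s)) := by
  set m := ε * (1 - t) / (2 * s)
  have hm : 2 * s * m = ε * (1 - t) := by unfold m; field_simp
  have key : s * (4 * (y / 2 * (3 * x ^ 2 - 1) - m) * (y / 2 * (1 - y ^ 2) - m)
        - ((1 - y ^ 2) * x) ^ 2)
      = s * (1 - y ^ 2) * (x ^ 2 * (4 * y ^ 2 - 1) - y ^ 2)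
        - ε * (1 - t) * y * (3 * x ^ 2 - y ^ 2) + 2 * m * (ε * (1 - t)) := by
    linear_combination (2 * m - y * (3 * x ^ 2 - y ^ 2)) * hm
  have : 0 ≤ s * (4 * (y / 2 * (3 * x ^ 2 - 1) - m) * (y / 2 * (1 - y ^ 2) - m)
      - ((1 - y ^ 2) * x) ^ 2) := by
    rw [key]
    have := discr_le_of_one_le_mul ht0 ht1 hs0 hst hys hε0 hεy hx
    have : 0 ≤ 2 * m * (ε * (1 - t)) := by have := sub_nonneg.2 ht1; positivity
    linarith
  exact sub_nonneg.1 <| (mul_nonneg_iff_of_pos_left hs0).mp this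

end

theorem stmt_18_general (δ ε x y w₁ w₂ : ℝ) (hδ1 : 0 < δ) (hδ2 : δ < 1/2)
    (hε1 : 0 < ε)
    (hx1 : 1 / Real.sqrt 2 < x)
    (hy1 : 1 / Real.sqrt (2 - δ) < y) (hy2 : y ≤ Real.sqrt (1 - ε)) :
    y/2 * (3*x^2 - 1) * w₁^2 - (1 - y^2) * x * w₁ * w₂ + y/2 * (1 - y^2) * w₂^2
      ≥ (ε * (1 - Real.sqrt (1 - δ)) / (2 * Real.sqrt (2 - δ))) * (w₁^2 + w₂^2) := by
  set s := Real.sqrt (2 - δ)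
  set t := Real.sqrt (1 - δ)
  have hs0 : 0 < s := Real.sqrt_pos.2 (by linarith)
  have ht0 : 0 ≤ t := Real.sqrt_nonneg _
  have ht1 : t ≤ 1 := Real.sqrt_le_one.2 (by linarith)
  have hst : s ^ 2 = 1 + t ^ 2 := by
    rw [Real.sq_sqrt (by linarith), Real.sq_sqrt (by linarith)]; ring
  have hys : 1 < y * s := (div_lt_iff₀ hs0).1 hy1
  have hy0 : 0 < y := pos_of_mul_pos_left (by linarith) hs0.le
  have hεy : ε ≤ 1 - y ^ 2 := by linarith [(Real.le_sqrt' hy0).1 hy2]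
  have hx : 1 < 2 * x ^ 2 := by
    have := (div_lt_iff₀ (by positivity : (0:ℝ) < Real.sqrt 2)).1 hx1
    nlinarith [Real.sq_sqrt (show (0:ℝ) ≤ 2 by norm_num)]
  have hshift : ε * (1 - t) / (2 * s) < y / 2 * (3 * x ^ 2 - 1) := by
    rw [div_lt_iff₀ (by positivity)]
    nlinarith [mul_le_mul_of_nonneg_left ht0 hε1.le]
  have hdisc := sq_le_four_mul_sub_of_one_le_mul ht0 ht1 hs0 hst hys.le hε1.le hεy hx.le
  have := quadForm_nonneg_of_sq_le_four_mul (sub_pos.2 hshift) hdisc w₁ w₂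
  linarith

theorem stmt_18 (δ ε x y w₁ w₂ : ℝ) (hδ1 : 0 < δ) (hδ2 : δ < 1/2)
    (hε1 : 0 < ε) (hε2 : ε < 1/2)
    (hx1 : 1 / Real.sqrt 2 < x) (hx2 : x ≤ 1)
    (hy1 : 1 / Real.sqrt (2 - δ) < y) (hy2 : y ≤ Real.sqrt (1 - ε)) :
    y/2 * (3*x^2 - 1) * w₁^2 - (1 - y^2) * x * w₁ * w₂ + y/2 * (1 - y^2) * w₂^2
      ≥ (ε * (1 - Real.sqrt (1 - δ)) / (2 * Real.sqrt (2 - δ))) * (w₁^2 + w₂^2) :=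
  stmt_18_general δ ε x y w₁ w₂ hδ1 hδ2 hε1 hx1 hy1 hy2
end
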